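/- arXiv:2505.12841 — 3 statements merged into one kernel-verified Lean document; each statement's English description precedes it below -/
import Mathlib

section
/- Pseudo-conformal transformation of Ψ-spinors: let t ∈ ℝ, t ≠ 0, and let U, ψ₁, ψ₂ : ℂ → ℂ be real-differentiable functions with U real-valued such that ∂ψ₂(w) + U(w)ψ₁(w) = 0 and −∂̄ψ₁(w) + U(w)ψ₂(w) = 0 for all w ∈ ℂ. Define Ũ(z) = (1/t)·exp(−i(z² + conj(z)²)/(8t))·U(z/t), ψ̃₁(z) = exp(i z²/(8t))·ψ₁(z/t), and ψ̃₂(z) = exp(−i conj(z)²/(8t))·ψ₂(z/t). Then for every z ∈ ℂ one has ∂ψ̃₂(z) + Ũ(z)·ψ̃₁(z) = 0 and −∂̄ψ̃₁(z) + conj(Ũ(z))·ψ̃₂(z) = 0. -/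
/-!
The phases are chosen so that the derivatives pass straight through them: `exp (i z² / 8t)` is
holomorphic, hence invisible to `∂̄`, and `exp (-i z̄² / 8t)` is antiholomorphic, hence invisible
to `∂`. The dilation `z ↦ z / t` contributes the factor `1 / t`, and the leftover phases combine
into the phase of `Ũ`, whose conjugate flips sign because `z² + z̄²` is real.
-/

open Complex

/-- Wirtinger derivative ∂f(z) = (1/2)(Df(z)(1) − i·Df(z)(i)). -/
noncomputable def wirtingerD (f : ℂ → ℂ) (z : ℂ) : ℂ :=
  (1 / 2) * (fderiv ℝ f z 1 - Complex.I * fderiv ℝ f z Complex.I)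

/-- Conjugate Wirtinger derivative ∂̄f(z) = (1/2)(Df(z)(1) + i·Df(z)(i)). -/
noncomputable def wirtingerDBar (f : ℂ → ℂ) (z : ℂ) : ℂ :=
  (1 / 2) * (fderiv ℝ f z 1 + Complex.I * fderiv ℝ f z Complex.I)

open ComplexConjugate

lemma wirtingerD_mul {f g : ℂ → ℂ} {z : ℂ} (hf : DifferentiableAt ℝ f z)
    (hg : DifferentiableAt ℝ g z) :
    wirtingerD (fun w => f w * g w) z = wirtingerD f z * g z + f z * wirtingerD g z := by
  simp only [wirtingerD, fderiv_fun_mul hf hg, add_apply, smul_apply, smul_eq_mul]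
  ring

lemma wirtingerDBar_mul {f g : ℂ → ℂ} {z : ℂ} (hf : DifferentiableAt ℝ f z)
    (hg : DifferentiableAt ℝ g z) :
    wirtingerDBar (fun w => f w * g w) z = wirtingerDBar f z * g z + f z * wirtingerDBar g z := by
  simp only [wirtingerDBar, fderiv_fun_mul hf hg, add_apply, smul_apply, smul_eq_mul]
  ring

lemma DifferentiableAt.wirtingerDBar_eq_zero {f : ℂ → ℂ} {z : ℂ} (hf : DifferentiableAt ℂ f z) :
    wirtingerDBar f z = 0 := by
  have hI : fderiv ℂ f z I = I * fderiv ℂ f z 1 := by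
    rw [← smul_eq_mul, ← map_smul, smul_eq_mul, mul_one]
  simp only [wirtingerDBar, hf.fderiv_restrictScalars ℝ, ContinuousLinearMap.coe_restrictScalars',
    hI, ← mul_assoc, I_mul_I]
  ring

lemma wirtingerD_comp_conj (f : ℂ → ℂ) (z : ℂ) :
    wirtingerD (fun w => f (conj w)) z = wirtingerDBar f (conj z) := by
  rw [show (fun w => f (conj w)) = f ∘ conjCLE from rfl, wirtingerD, wirtingerDBar,
    conjCLE.comp_right_fderiv]
  simp [conj_I]

lemma wirtingerDBar_holomorphic_mul {F g : ℂ → ℂ} {z : ℂ} (hF : DifferentiableAt ℂ F z)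
    (hg : DifferentiableAt ℝ g z) :
    wirtingerDBar (fun w => F w * g w) z = F z * wirtingerDBar g z := by
  rw [wirtingerDBar_mul (hF.restrictScalars ℝ) hg, hF.wirtingerDBar_eq_zero, zero_mul, zero_add]

lemma wirtingerD_conj_holomorphic_mul {F g : ℂ → ℂ} {z : ℂ} (hF : DifferentiableAt ℂ F (conj z))
    (hg : DifferentiableAt ℝ g z) :
    wirtingerD (fun w => F (conj w) * g w) z = F (conj z) * wirtingerD g z := by
  have hFc : DifferentiableAt ℝ (fun w => F (conj w)) z :=
    (hF.restrictScalars ℝ).comp z conjCLE.differentiableAt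
  rw [wirtingerD_mul hFc hg, wirtingerD_comp_conj, hF.wirtingerDBar_eq_zero, zero_mul, zero_add]

lemma fderiv_comp_div_ofReal (f : ℂ → ℂ) (t : ℝ) (z : ℂ) :
    fderiv ℝ (fun w => f (w / t)) z = t⁻¹ • fderiv ℝ f (z / t) := by
  have e : ∀ w : ℂ, t⁻¹ • w = w / t := fun w => by
    rw [real_smul, div_eq_inv_mul, ofReal_inv]
  simpa only [e] using fderiv_comp_smul (f := f) (x := z) t⁻¹

lemma wirtingerD_comp_div_ofReal (f : ℂ → ℂ) (t : ℝ) (z : ℂ) :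
    wirtingerD (fun w => f (w / t)) z = wirtingerD f (z / t) / t := by
  simp only [wirtingerD, fderiv_comp_div_ofReal, smul_apply, real_smul, ofReal_inv]
  ring

lemma wirtingerDBar_comp_div_ofReal (f : ℂ → ℂ) (t : ℝ) (z : ℂ) :
    wirtingerDBar (fun w => f (w / t)) z = wirtingerDBar f (z / t) / t := by
  simp only [wirtingerDBar, fderiv_comp_div_ofReal, smul_apply, real_smul, ofReal_inv]
  ring

theorem stmt_2_general
    (t : ℝ)
    (U ψ₁ ψ₂ : ℂ → ℂ)
    (hψ₁diff : Differentiable ℝ ψ₁)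
    (hψ₂diff : Differentiable ℝ ψ₂)
    (hUreal : ∀ w, (starRingEnd ℂ) (U w) = U w)
    (hdirac₁ : ∀ w, wirtingerD ψ₂ w + U w * ψ₁ w = 0)
    (hdirac₂ : ∀ w, -wirtingerDBar ψ₁ w + U w * ψ₂ w = 0)
    (Ut ψt₁ ψt₂ : ℂ → ℂ)
    (hUt : ∀ z, Ut z =
      (1 / (t : ℂ)) *
        Complex.exp (-Complex.I * (z ^ 2 + ((starRingEnd ℂ) z) ^ 2) / (8 * (t : ℂ))) *
        U (z / (t : ℂ)))
    (hψt₁ : ∀ z, ψt₁ z =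
      Complex.exp (Complex.I * z ^ 2 / (8 * (t : ℂ))) * ψ₁ (z / (t : ℂ)))
    (hψt₂ : ∀ z, ψt₂ z =
      Complex.exp (-Complex.I * ((starRingEnd ℂ) z) ^ 2 / (8 * (t : ℂ))) * ψ₂ (z / (t : ℂ))) :
    ∀ z : ℂ,
      wirtingerD ψt₂ z + Ut z * ψt₁ z = 0 ∧
      -wirtingerDBar ψt₁ z + (starRingEnd ℂ) (Ut z) * ψt₂ z = 0 := by
  intro z
  have hdiv : Differentiable ℝ (fun w : ℂ => w / (t : ℂ)) := by fun_prop
  constructor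
  · have hexp : cexp (-I * (z ^ 2 + conj z ^ 2) / (8 * t)) * cexp (I * z ^ 2 / (8 * t)) =
        cexp (-I * conj z ^ 2 / (8 * t)) := by
      rw [← exp_add]; congr 1; ring
    rw [show ψt₂ = _ from funext hψt₂,
      wirtingerD_conj_holomorphic_mul (F := fun u => cexp (-I * u ^ 2 / (8 * t)))
        (g := fun w => ψ₂ (w / t)) (by fun_prop) ((hψ₂diff _).comp z (hdiv z)),
      wirtingerD_comp_div_ofReal, hUt, hψt₁]
    linear_combination (cexp (-I * conj z ^ 2 / (8 * t)) / t) * hdirac₁ (z / t) +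
      (U (z / t) * ψ₁ (z / t) / t) * hexp
  · have hexp : cexp (I * (z ^ 2 + conj z ^ 2) / (8 * t)) * cexp (-I * conj z ^ 2 / (8 * t)) =
        cexp (I * z ^ 2 / (8 * t)) := by
      rw [← exp_add]; congr 1; ring
    have hUt_conj :
        conj (Ut z) = 1 / t * cexp (I * (z ^ 2 + conj z ^ 2) / (8 * t)) * U (z / t) := by
      rw [hUt, map_mul, map_mul, ← exp_conj, hUreal]
      simp only [map_div₀, map_mul, map_add, map_pow, map_neg, map_one, map_ofNat, conj_ofReal,
        conj_I, conj_conj]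
      ring_nf
    rw [show ψt₁ = _ from funext hψt₁,
      wirtingerDBar_holomorphic_mul (g := fun w => ψ₁ (w / t)) (by fun_prop)
        ((hψ₁diff _).comp z (hdiv z)),
      wirtingerDBar_comp_div_ofReal, hUt_conj, hψt₂]
    linear_combination (cexp (I * z ^ 2 / (8 * t)) / t) * hdirac₂ (z / t) +
      (U (z / t) * ψ₂ (z / t) / t) * hexp

theorem stmt_2
    (t : ℝ) (ht : t ≠ 0)
    (U ψ₁ ψ₂ : ℂ → ℂ)
    (hUdiff : Differentiable ℝ U)
    (hψ₁diff : Differentiable ℝ ψ₁)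
    (hψ₂diff : Differentiable ℝ ψ₂)
    (hUreal : ∀ w, (starRingEnd ℂ) (U w) = U w)
    (hdirac₁ : ∀ w, wirtingerD ψ₂ w + U w * ψ₁ w = 0)
    (hdirac₂ : ∀ w, -wirtingerDBar ψ₁ w + U w * ψ₂ w = 0)
    (Ut ψt₁ ψt₂ : ℂ → ℂ)
    (hUt : ∀ z, Ut z =
      (1 / (t : ℂ)) *
        Complex.exp (-Complex.I * (z ^ 2 + ((starRingEnd ℂ) z) ^ 2) / (8 * (t : ℂ))) *
        U (z / (t : ℂ)))
    (hψt₁ : ∀ z, ψt₁ z =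
      Complex.exp (Complex.I * z ^ 2 / (8 * (t : ℂ))) * ψ₁ (z / (t : ℂ)))
    (hψt₂ : ∀ z, ψt₂ z =
      Complex.exp (-Complex.I * ((starRingEnd ℂ) z) ^ 2 / (8 * (t : ℂ))) * ψ₂ (z / (t : ℂ))) :
    ∀ z : ℂ,
      wirtingerD ψt₂ z + Ut z * ψt₁ z = 0 ∧
      -wirtingerDBar ψt₁ z + (starRingEnd ℂ) (Ut z) * ψt₂ z = 0 :=
  stmt_2_general t U ψ₁ ψ₂ hψ₁diff hψ₂diff hUreal hdirac₁ hdirac₂ Ut ψt₁ ψt₂ hUt hψt₁ hψt₂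
end

section
/- For every real t ≠ 0, the squared L² norm of the Ozawa solution at time t equals π: ∫_{ℝ²} |Ũ(x + iy, t)|² dx dy = π, where Ũ(z,t) = (1/t)·exp(−i(z² + conj(z)²)/(8t))·1/(1 + |z|²/t²). In particular the squared L² norm is independent of t for t ≠ 0. -/
open Complex MeasureTheory

/-- The Ozawa solution of the Davey–Stewartson II equation:
`Ũ(z,t) = (1/t)·exp(−i(z² + conj(z)²)/(8t))·1/(1 + |z|²/t²)`. -/
noncomputable def ozawaU (z : ℂ) (t : ℝ) : ℂ :=
  (1 / (t : ℂ)) *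
    Complex.exp (-Complex.I * (z ^ 2 + ((starRingEnd ℂ) z) ^ 2) / (8 * (t : ℂ))) *
    (1 / (1 + (‖z‖ : ℂ) ^ 2 / (t : ℂ) ^ 2))

/-!
The phase factor of `Ũ` has modulus one, since `z² + conj(z)² = 2 Re(z²)` is real, so
`|Ũ(z,t)|² = t² / (t² + |z|²)²` is radial. In polar coordinates the integral becomes
`2π t² ∫₀^∞ r / (t² + r²)² dr = 2π t² · 1/(2t²) = π`.
-/

open Set Filter Topology

section Radial

variable {E : Type*} [NormedAddCommGroup E] [NormedSpace ℝ E]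

theorem Complex.integral_comp_add_mul_I (g : ℂ → E) :
    ∫ p : ℝ × ℝ, g (p.1 + p.2 * I) = ∫ z, g z := by
  rw [← volume_preserving_equiv_real_prod.symm.integral_comp
    measurableEquivRealProd.symm.measurableEmbedding]
  simp [mk_eq_add_mul_I]

theorem Complex.integral_fun_norm (f : ℝ → E) :
    ∫ z : ℂ, f ‖z‖ = (2 * Real.pi) • ∫ r in Ioi (0 : ℝ), r • f r := by
  rw [integral_fun_norm_addHaar volume f, finrank_real_complex, measureReal_def,
    Complex.volume_ball]
  simp [mul_smul, ← Nat.cast_smul_eq_nsmul ℝ]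

end Radial

theorem integral_Ioi_div_add_sq_sq {a : ℝ} (ha : 0 < a) :
    ∫ r in Ioi (0 : ℝ), r / (a + r ^ 2) ^ 2 = (2 * a)⁻¹ := by
  have hderiv : ∀ r ∈ Ici (0 : ℝ),
      HasDerivAt (fun r ↦ -(2 * (a + r ^ 2))⁻¹) (r / (a + r ^ 2) ^ 2) r := by
    intro r _
    have hne : 2 * (a + r ^ 2) ≠ 0 := by positivity
    refine ((((hasDerivAt_pow 2 r).const_add a).const_mul 2).inv hne).neg.congr_deriv ?_
    field_simp
    ring
  have hlim : Tendsto (fun r : ℝ ↦ -(2 * (a + r ^ 2))⁻¹) atTop (𝓝 0) := by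
    have h := (tendsto_atTop_add_const_left _ a
      (tendsto_pow_atTop two_ne_zero)).const_mul_atTop two_pos
    simpa using h.inv_tendsto_atTop.neg
  have hnonneg : ∀ r ∈ Ioi (0 : ℝ), 0 ≤ r / (a + r ^ 2) ^ 2 := fun r hr ↦
    div_nonneg hr.le (by positivity)
  rw [integral_Ioi_of_hasDerivAt_of_nonneg' hderiv hnonneg hlim]
  simp

theorem norm_exp_neg_I_mul_add_conj_div_ofReal (w : ℂ) (c : ℝ) :
    ‖exp (-I * (w + (starRingEnd ℂ) w) / c)‖ = 1 := by
  rw [add_conj, norm_exp]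
  simp [div_re]

theorem norm_ozawaU_sq (z : ℂ) (t : ℝ) :
    ‖ozawaU z t‖ ^ 2 = t ^ 2 / (t ^ 2 + ‖z‖ ^ 2) ^ 2 := by
  rcases eq_or_ne t 0 with rfl | ht
  · simp [ozawaU]
  have hphase := norm_exp_neg_I_mul_add_conj_div_ofReal (z ^ 2) (8 * t)
  rw [map_pow] at hphase
  push_cast at hphase
  have hden : (1 + (‖z‖ : ℂ) ^ 2 / (t : ℂ) ^ 2) = ((1 + ‖z‖ ^ 2 / t ^ 2 : ℝ) : ℂ) := by
    push_cast; ring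
  have hpos : 0 < 1 + ‖z‖ ^ 2 / t ^ 2 := by positivity
  rw [ozawaU, norm_mul, norm_mul, hphase, hden, norm_div, norm_div, norm_real, norm_real, norm_one,
    Real.norm_of_nonneg hpos.le, mul_one, mul_pow, div_pow, Real.norm_eq_abs, sq_abs]
  field_simp

theorem stmt_4 (t : ℝ) (ht : t ≠ 0) :
    ∫ p : ℝ × ℝ, ‖ozawaU (p.1 + p.2 * Complex.I) t‖ ^ 2 = Real.pi := by
  calc ∫ p : ℝ × ℝ, ‖ozawaU (p.1 + p.2 * I) t‖ ^ 2
      = ∫ z : ℂ, ‖ozawaU z t‖ ^ 2 := integral_comp_add_mul_I fun z ↦ ‖ozawaU z t‖ ^ 2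
    _ = ∫ z : ℂ, t ^ 2 / (t ^ 2 + ‖z‖ ^ 2) ^ 2 := by simp_rw [norm_ozawaU_sq]
    _ = (2 * Real.pi) • ∫ r in Ioi (0 : ℝ), r • (t ^ 2 / (t ^ 2 + r ^ 2) ^ 2) :=
        integral_fun_norm fun r ↦ t ^ 2 / (t ^ 2 + r ^ 2) ^ 2
    _ = 2 * Real.pi * (t ^ 2 * ∫ r in Ioi (0 : ℝ), r / (t ^ 2 + r ^ 2) ^ 2) := by
        simp_rw [smul_eq_mul, mul_div_left_comm _ (t ^ 2), integral_const_mul]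
    _ = Real.pi := by
        rw [integral_Ioi_div_add_sq_sq (by positivity)]
        field_simp
end

section
/- For every real t ≠ 0, the spinor ψ̃₁(z) = (t·conj(z)/(t² + |z|²))·exp(i z²/(8t)), ψ̃₂(z) = (t²/(t² + |z|²))·exp(−i conj(z)²/(8t)) solves the Dirac equation with the Ozawa potential Ũ(z,t) = (1/t)·exp(−i(z² + conj(z)²)/(8t))·1/(1 + |z|²/t²); that is, for all z ∈ ℂ, ∂ψ̃₂(z) + Ũ(z,t)·ψ̃₁(z) = 0 and −∂̄ψ̃₁(z) + conj(Ũ(z,t))·ψ̃₂(z) = 0. -/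
open Complex

/-! Write the real derivative of `f` at `z` as `h ↦ a h + b h̄`: then `a = ∂f(z)`, `b = ∂̄f(z)`, and
these coefficients obey the Leibniz rule and the chain rule with a holomorphic outer function.
With `N = t² + z z̄`, the phase of `ψ̃₂` is antiholomorphic, so `∂ψ̃₂ = t² ∂(1/N) · e^{-i z̄²/8t}` and
`∂N = z̄`; the phase of `ψ̃₁` is holomorphic, so `∂̄ψ̃₁ = ∂̄(t z̄ / N) · e^{i z²/8t} = t³/N² · e^{i z²/8t}`.
Since `Ũ = (t / N) e^{-i(z² + z̄²)/8t}`, the phases of `Ũ ψ̃₁` and `Ū ψ̃₂` collapse to those of `ψ̃₂`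
and `ψ̃₁`, and both equations reduce to identities of rational functions of `z, z̄`. -/

noncomputable def wirtingerCLM (a b : ℂ) : ℂ →L[ℝ] ℂ :=
  a • ContinuousLinearMap.id ℝ ℂ + b • (conjCLE : ℂ →L[ℝ] ℂ)

@[simp]
theorem wirtingerCLM_apply (a b h : ℂ) : wirtingerCLM a b h = a * h + b * (starRingEnd ℂ) h := by
  simp [wirtingerCLM]

def HasWirtingerDerivAt (f : ℂ → ℂ) (a b z : ℂ) : Prop :=
  HasFDerivAt f (wirtingerCLM a b) z

theorem HasDerivAt.comp_hasWirtingerDerivAt {h : ℂ → ℂ} {h' : ℂ} {f : ℂ → ℂ} {a b z : ℂ}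
    (hh : HasDerivAt h h' (f z)) (hf : HasWirtingerDerivAt f a b z) :
    HasWirtingerDerivAt (fun w => h (f w)) (h' * a) (h' * b) z := by
  refine (hh.comp_hasFDerivAt z hf).congr_fderiv ?_
  ext1 w
  simp only [smul_apply, wirtingerCLM_apply, smul_eq_mul]
  ring

theorem hasWirtingerDerivAt_id (z : ℂ) : HasWirtingerDerivAt id 1 0 z := by
  refine (hasFDerivAt_id z).congr_fderiv ?_
  ext1 w
  simp

theorem hasWirtingerDerivAt_conj (z : ℂ) : HasWirtingerDerivAt (starRingEnd ℂ) 0 1 z := by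
  refine conjCLE.hasFDerivAt.congr_fderiv ?_
  ext1 w
  simp

theorem HasDerivAt.hasWirtingerDerivAt {f : ℂ → ℂ} {f' z : ℂ} (hf : HasDerivAt f f' z) :
    HasWirtingerDerivAt f f' 0 z := by
  simpa using hf.comp_hasWirtingerDerivAt (hasWirtingerDerivAt_id z)

namespace HasWirtingerDerivAt

variable {f g : ℂ → ℂ} {a b c d z : ℂ}

theorem wirtingerD_eq (hf : HasWirtingerDerivAt f a b z) : wirtingerD f z = a := by
  rw [wirtingerD, hf.fderiv, wirtingerCLM_apply, wirtingerCLM_apply, map_one, conj_I]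
  linear_combination (1 / 2 * (b - a)) * I_mul_I

theorem wirtingerDBar_eq (hf : HasWirtingerDerivAt f a b z) : wirtingerDBar f z = b := by
  rw [wirtingerDBar, hf.fderiv, wirtingerCLM_apply, wirtingerCLM_apply, map_one, conj_I]
  linear_combination (1 / 2 * (a - b)) * I_mul_I

theorem const_add (hf : HasWirtingerDerivAt f a b z) (c : ℂ) :
    HasWirtingerDerivAt (fun w => c + f w) a b z :=
  HasFDerivAt.const_add c hf

theorem const_mul (hf : HasWirtingerDerivAt f a b z) (c : ℂ) :
    HasWirtingerDerivAt (fun w => c * f w) (c * a) (c * b) z :=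
  (hasDerivAt_const_mul c).comp_hasWirtingerDerivAt hf

theorem mul (hf : HasWirtingerDerivAt f a b z) (hg : HasWirtingerDerivAt g c d z) :
    HasWirtingerDerivAt (fun w => f w * g w) (f z * c + a * g z) (f z * d + b * g z) z := by
  refine (HasFDerivAt.mul hf hg).congr_fderiv ?_
  ext1 h
  simp only [add_apply, smul_apply, wirtingerCLM_apply, smul_eq_mul]
  ring

theorem inv (hf : HasWirtingerDerivAt f a b z) (hz : f z ≠ 0) :
    HasWirtingerDerivAt (fun w => (f w)⁻¹) (-a / f z ^ 2) (-b / f z ^ 2) z := by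
  convert (hasDerivAt_inv hz).comp_hasWirtingerDerivAt hf using 1 <;> ring

theorem div (hf : HasWirtingerDerivAt f a b z) (hg : HasWirtingerDerivAt g c d z) (hz : g z ≠ 0) :
    HasWirtingerDerivAt (fun w => f w / g w)
      ((a * g z - f z * c) / g z ^ 2) ((b * g z - f z * d) / g z ^ 2) z := by
  convert hf.mul (hg.inv hz) using 1 <;> field_simp <;> ring

end HasWirtingerDerivAt

theorem hasWirtingerDerivAt_sq_norm (z : ℂ) :
    HasWirtingerDerivAt (fun w => (‖w‖ : ℂ) ^ 2) ((starRingEnd ℂ) z) z z := by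
  simp_rw [← mul_conj']
  simpa using (hasWirtingerDerivAt_id z).mul (hasWirtingerDerivAt_conj z)

noncomputable def ozawaPsi₁ (t : ℝ) (z : ℂ) : ℂ :=
  ((t : ℂ) * (starRingEnd ℂ) z / ((t : ℂ) ^ 2 + (‖z‖ : ℂ) ^ 2)) *
    exp (I * z ^ 2 / (8 * (t : ℂ)))

noncomputable def ozawaPsi₂ (t : ℝ) (z : ℂ) : ℂ :=
  ((t : ℂ) ^ 2 / ((t : ℂ) ^ 2 + (‖z‖ : ℂ) ^ 2)) *
    exp (-I * ((starRingEnd ℂ) z) ^ 2 / (8 * (t : ℂ)))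

section Ozawa

variable {t : ℝ}

theorem sq_add_sq_norm_ne_zero (ht : t ≠ 0) (z : ℂ) : (t : ℂ) ^ 2 + (‖z‖ : ℂ) ^ 2 ≠ 0 := by
  exact_mod_cast (by positivity : (0 : ℝ) < t ^ 2 + ‖z‖ ^ 2).ne'

theorem wirtingerDBar_ozawaPsi₁ (ht : t ≠ 0) (z : ℂ) :
    wirtingerDBar (ozawaPsi₁ t) z =
      (t : ℂ) ^ 3 / ((t : ℂ) ^ 2 + (‖z‖ : ℂ) ^ 2) ^ 2 * exp (I * z ^ 2 / (8 * (t : ℂ))) := by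
  have hexp := (((hasDerivAt_pow 2 z).const_mul I).div_const (8 * (t : ℂ))).cexp
  have h : HasWirtingerDerivAt (ozawaPsi₁ t) _ _ z :=
    (((hasWirtingerDerivAt_conj z).const_mul (t : ℂ)).div
      ((hasWirtingerDerivAt_sq_norm z).const_add _) (sq_add_sq_norm_ne_zero ht z)).mul
      hexp.hasWirtingerDerivAt
  rw [h.wirtingerDBar_eq, ← mul_conj']
  ring

theorem wirtingerD_ozawaPsi₂ (ht : t ≠ 0) (z : ℂ) :
    wirtingerD (ozawaPsi₂ t) z =
      -(t : ℂ) ^ 2 * (starRingEnd ℂ) z / ((t : ℂ) ^ 2 + (‖z‖ : ℂ) ^ 2) ^ 2 *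
        exp (-I * ((starRingEnd ℂ) z) ^ 2 / (8 * (t : ℂ))) := by
  have hexp := ((((hasDerivAt_pow 2 ((starRingEnd ℂ) z)).const_mul (-I)).div_const
    (8 * (t : ℂ))).cexp).comp_hasWirtingerDerivAt (hasWirtingerDerivAt_conj z)
  have h : HasWirtingerDerivAt (ozawaPsi₂ t) _ _ z :=
    ((((hasWirtingerDerivAt_sq_norm z).const_add _).inv (sq_add_sq_norm_ne_zero ht z)).const_mul
      ((t : ℂ) ^ 2)).mul hexp
  rw [h.wirtingerD_eq]
  ring

theorem ozawaU_eq (ht : t ≠ 0) (z : ℂ) :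
    ozawaU z t = t / ((t : ℂ) ^ 2 + (‖z‖ : ℂ) ^ 2) *
      exp (-I * (z ^ 2 + ((starRingEnd ℂ) z) ^ 2) / (8 * (t : ℂ))) := by
  have ht' : (t : ℂ) ≠ 0 := ofReal_ne_zero.mpr ht
  rw [ozawaU]
  field_simp

theorem conj_ozawaU (ht : t ≠ 0) (z : ℂ) :
    (starRingEnd ℂ) (ozawaU z t) = t / ((t : ℂ) ^ 2 + (‖z‖ : ℂ) ^ 2) *
      exp (I * (z ^ 2 + ((starRingEnd ℂ) z) ^ 2) / (8 * (t : ℂ))) := by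
  rw [ozawaU_eq ht, map_mul, ← exp_conj]
  simp only [map_div₀, map_mul, map_add, map_pow, map_neg, conj_I, conj_ofReal, conj_conj,
    map_ofNat]
  ring_nf

end Ozawa

theorem stmt_8 (t : ℝ) (ht : t ≠ 0)
    (ψt₁ ψt₂ : ℂ → ℂ)
    (hψt₁ : ∀ z, ψt₁ z =
      ((t : ℂ) * (starRingEnd ℂ) z / ((t : ℂ) ^ 2 + (‖z‖ : ℂ) ^ 2)) *
        Complex.exp (Complex.I * z ^ 2 / (8 * (t : ℂ))))
    (hψt₂ : ∀ z, ψt₂ z =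
      ((t : ℂ) ^ 2 / ((t : ℂ) ^ 2 + (‖z‖ : ℂ) ^ 2)) *
        Complex.exp (-Complex.I * ((starRingEnd ℂ) z) ^ 2 / (8 * (t : ℂ)))) :
    ∀ z : ℂ,
      wirtingerD ψt₂ z + ozawaU z t * ψt₁ z = 0 ∧
      -wirtingerDBar ψt₁ z + (starRingEnd ℂ) (ozawaU z t) * ψt₂ z = 0 := by
  obtain rfl : ψt₁ = ozawaPsi₁ t := funext hψt₁
  obtain rfl : ψt₂ = ozawaPsi₂ t := funext hψt₂
  intro z
  have hexp₁ : exp (-I * (z ^ 2 + (starRingEnd ℂ) z ^ 2) / (8 * t)) * exp (I * z ^ 2 / (8 * t)) =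
      exp (-I * (starRingEnd ℂ) z ^ 2 / (8 * t)) := by
    rw [← exp_add]; congr 1; ring
  have hexp₂ : exp (I * (z ^ 2 + (starRingEnd ℂ) z ^ 2) / (8 * t)) *
      exp (-I * (starRingEnd ℂ) z ^ 2 / (8 * t)) = exp (I * z ^ 2 / (8 * t)) := by
    rw [← exp_add]; congr 1; ring
  constructor
  · rw [wirtingerD_ozawaPsi₂ ht, ozawaU_eq ht, ozawaPsi₁]
    generalize (t : ℂ) ^ 2 + (‖z‖ : ℂ) ^ 2 = N
    linear_combination ((t : ℂ) ^ 2 * (starRingEnd ℂ) z / N ^ 2) * hexp₁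
  · rw [wirtingerDBar_ozawaPsi₁ ht, conj_ozawaU ht, ozawaPsi₂]
    generalize (t : ℂ) ^ 2 + (‖z‖ : ℂ) ^ 2 = N
    linear_combination ((t : ℂ) ^ 3 / N ^ 2) * hexp₂
end
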